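/- Let Γ be a set of subsets of a set A and define the encoding I(Q) := the downset of (ℕ^Γ, ⊑) generated by {pt(ρ) : ρ ∈ Q} for Q ⊆ DD(Γ). If Q₁, Q₂ ⊆ DD(Γ) satisfy I(Q₁) = I(Q₂), then Pol(Q₁) = Pol(Q₂); i.e., the kernel of the encoding map I is contained in the kernel of the map Q ↦ Pol(Q) on 𝒫(DD(Γ)). -/

import Mathlib

/-- The `n`-ary cross relation defined by the tuple `γ` of unary relations:
`{(x₁,…,xₙ) : x₁ ∈ γ₁ ∨ … ∨ xₙ ∈ γₙ}`. -/
def Cross {A : Type*} {n : ℕ} (γ : Fin n → Set A) : Set (Fin n → A) :=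
  {x | ∃ i, x i ∈ γ i}

/-- A finitary relation on `A`: an arity together with a set of tuples. -/
abbrev FinRel (A : Type*) := Σ n : ℕ, Set (Fin n → A)

/-- A `k`-ary operation `f` preserves an `n`-ary relation `ρ`. -/
def Preserves {A : Type*} {k n : ℕ} (f : (Fin k → A) → A) (ρ : Set (Fin n → A)) : Prop :=
  ∀ r : Fin k → Fin n → A, (∀ j, r j ∈ ρ) → (fun i => f fun j => r j i) ∈ ρ

/-- A finitary operation on `A` of positive arity `k + 1`. -/
abbrev Op (A : Type*) := Σ k : ℕ, (Fin (k + 1) → A) → A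

/-- The polymorphism clone of a set of finitary relations. -/
def Pol {A : Type*} (Q : Set (FinRel A)) : Set (Op A) :=
  {f | ∀ ρ ∈ Q, Preserves f.2 ρ.2}

/-- Relations disjunctively definable from the unary language `Γ`. -/
def DD {A : Type*} (Γ : Set (Set A)) : Set (FinRel A) :=
  {ρ | 1 ≤ ρ.1 ∧ ∃ γ : Fin ρ.1 → Set A, (∀ i, γ i ∈ Γ) ∧ ρ.2 = Cross γ}

/-- Support of a tuple of naturals. -/
def supp {I : Type*} (x : I → ℕ) : Set I := {i | x i ≠ 0}

/-- The order `⊑` on `ℕ^I`: pointwise `≤` together with equal supports. -/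
def sle {I : Type*} (x y : I → ℕ) : Prop := (∀ i, x i ≤ y i) ∧ supp x = supp y

/-- Downsets of the poset `(ℕ^I, ⊑)`. -/
def IsSleDownset {I : Type*} (X : Set (I → ℕ)) : Prop :=
  ∀ x ∈ X, ∀ y, sle y x → y ∈ X

open Classical in
/-- The canonical parameter tuple of a relation: the unique tuple of members of `Γ`
defining it as a cross if it is a proper subset of the full power, and `(A,…,A)` otherwise. -/
noncomputable def param {A : Type*} (Γ : Set (Set A)) (ρ : FinRel A) : Fin ρ.1 → Set A :=
  if ρ.2 = Set.univ then fun _ => Set.univ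
  else if h : ∃ γ : Fin ρ.1 → Set A, (∀ i, γ i ∈ Γ) ∧ ρ.2 = Cross γ then h.choose
  else fun _ => ∅

/-- The pattern of a relation: how often each `γ ∈ Γ` occurs in its canonical parameter. -/
noncomputable def pt {A : Type*} (Γ : Set (Set A)) (ρ : FinRel A) : ↥Γ → ℕ :=
  fun γ => Nat.card {i : Fin ρ.1 // param Γ ρ i = (γ : Set A)}

/-- The encoding map `I`: the downset of `(ℕ^Γ, ⊑)` generated by the patterns of `Q`. -/
def enc {A : Type*} (Γ : Set (Set A)) (Q : Set (FinRel A)) : Set (↥Γ → ℕ) :=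
  {x | ∃ ρ ∈ Q, sle x (pt Γ ρ)}

/-- `F^Inv`: the relations in `DD Γ` preserved by every operation in `F`. -/
def InvDD {A : Type*} (Γ : Set (Set A)) (F : Set (Op A)) : Set (FinRel A) :=
  {ρ | ρ ∈ DD Γ ∧ ∀ f ∈ F, Preserves f.2 ρ.2}

/-!
If `pt ρ₁ ⊑ pt ρ₂`, every parameter of `ρ₁` occurs in that of `ρ₂` at least as often and no new
ones occur, so the parameter tuple of `ρ₂` is that of `ρ₁` reindexed along a surjection `g`. Then
`x ∈ ρ₁ ↔ x ∘ g ∈ ρ₂`, so every operation preserving `ρ₂` preserves `ρ₁`. When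
`I(Q₁) ⊆ I(Q₂)`, each pattern of `Q₁` lies below one of `Q₂`, hence `Pol Q₂ ⊆ Pol Q₁`.
-/

open Function Set

section Preserves

variable {A : Type*} {k m n : ℕ} {f : (Fin k → A) → A}

theorem preserves_univ : Preserves f (univ : Set (Fin n → A)) :=
  fun _ _ => trivial

theorem Preserves.of_comp_mem_iff {ρ : Set (Fin n → A)} {σ : Set (Fin m → A)} (g : Fin m → Fin n)
    (hg : ∀ x, x ∘ g ∈ σ ↔ x ∈ ρ) (hf : Preserves f σ) : Preserves f ρ :=
  fun r hr => (hg _).1 (hf (fun j => r j ∘ g) fun j => (hg _).2 (hr j))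

theorem Preserves.cross_of_cross_comp {γ : Fin n → Set A} {g : Fin m → Fin n} (hg : Surjective g)
    (hf : Preserves f (Cross (γ ∘ g))) : Preserves f (Cross γ) :=
  hf.of_comp_mem_iff g fun x => (hg.exists (p := fun j => x j ∈ γ j)).symm

end Preserves

/-- Each fibre of `b` maps onto the corresponding fibre of `a`, which is nonempty whenever that of
`b` is. -/
theorem exists_surjective_comp_eq_of_sle {α β S : Type*} [Finite α] [Finite β]
    {a : α → S} {b : β → S}
    (hle : sle (fun v => Nat.card {i // a i = v}) (fun v => Nat.card {j // b j = v})) :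
    ∃ g : β → α, Surjective g ∧ a ∘ g = b := by
  have fiber : ∀ v, ∃ s : {j // b j = v} → {i // a i = v}, Surjective s := by
    intro v
    refine exists_surjective_iff.2 ⟨?_, ?_⟩
    · rcases isEmpty_or_nonempty {j // b j = v} with hb | hb
      · exact ⟨isEmptyElim⟩
      · have hv : v ∈ supp fun v => Nat.card {i // a i = v} :=
          hle.2 ▸ Nat.card_ne_zero.2 ⟨hb, inferInstance⟩
        obtain ⟨⟨i⟩, -⟩ := Nat.card_ne_zero.1 hv
        exact ⟨fun _ => i⟩
    · have := Fintype.ofFinite {i // a i = v}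
      have := Fintype.ofFinite {j // b j = v}
      refine Embedding.nonempty_of_card_le ?_
      simpa only [Nat.card_eq_fintype_card] using hle.1 v
  choose s hs using fiber
  refine ⟨fun j => s (b j) ⟨j, rfl⟩, fun i => ?_, funext fun j => (s (b j) ⟨j, rfl⟩).2⟩
  obtain ⟨⟨j, hj⟩, hji⟩ := hs (a i) ⟨i, rfl⟩
  have transport : ∀ v (hj : b j = v), (s (b j) ⟨j, rfl⟩ : α) = s v ⟨j, hj⟩ := by
    rintro v rfl
    rfl
  refine ⟨j, ?_⟩
  show (s (b j) ⟨j, rfl⟩ : α) = i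
  rw [transport _ hj, hji]

section Pattern

variable {A : Type*} {Γ : Set (Set A)} {ρ : FinRel A}

theorem param_of_eq_univ (h : ρ.2 = univ) : param Γ ρ = fun _ => univ := by
  rw [param, if_pos h]

theorem param_spec_of_ne_univ (hρ : ρ ∈ DD Γ) (hu : ρ.2 ≠ univ) :
    (∀ i, param Γ ρ i ∈ Γ) ∧ ρ.2 = Cross (param Γ ρ) := by
  rw [param, if_neg hu, dif_pos hρ.2]
  exact hρ.2.choose_spec

theorem cross_param (hρ : ρ ∈ DD Γ) : ρ.2 = Cross (param Γ ρ) := by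
  by_cases hu : ρ.2 = univ
  · rw [param_of_eq_univ hu, hu]
    exact (eq_univ_of_forall fun x => show ∃ i, x i ∈ univ from ⟨⟨0, hρ.1⟩, mem_univ _⟩).symm
  · exact (param_spec_of_ne_univ hρ hu).2

theorem param_mem (hρ : ρ ∈ DD Γ) (h : ρ.2 ≠ univ ∨ univ ∈ Γ) (i : Fin ρ.1) :
    param Γ ρ i ∈ Γ := by
  by_cases hu : ρ.2 = univ
  · rw [param_of_eq_univ hu]
    exact h.resolve_left (not_not.2 hu)
  · exact (param_spec_of_ne_univ hρ hu).1 i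

theorem pt_eq_natCard_fiber (hp : ∀ i, param Γ ρ i ∈ Γ) :
    pt Γ ρ = fun v => Nat.card {i // codRestrict (param Γ ρ) Γ hp i = v} :=
  funext fun _ => Nat.card_congr <| Equiv.subtypeEquivRight fun i =>
    (Subtype.ext_iff (a1 := codRestrict (param Γ ρ) Γ hp i)).symm

theorem pt_pos (i : Fin ρ.1) (hp : param Γ ρ i ∈ Γ) : 0 < pt Γ ρ ⟨param Γ ρ i, hp⟩ :=
  Nat.card_pos_iff.2 ⟨⟨⟨i, rfl⟩⟩, inferInstance⟩

theorem pt_eq_zero_of_eq_univ (h : ρ.2 = univ) (hΓ : univ ∉ Γ) : pt Γ ρ = 0 := by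
  funext v
  refine Nat.card_eq_zero.2 (.inl ⟨fun ⟨i, hi⟩ => hΓ ?_⟩)
  have hv : univ = (v : Set A) := by rw [← hi, param_of_eq_univ h]
  rw [hv]
  exact v.2

theorem Preserves.of_sle_pt {ρ₁ ρ₂ : FinRel A} (h₁ : ρ₁ ∈ DD Γ) (h₂ : ρ₂ ∈ DD Γ)
    (hle : sle (pt Γ ρ₁) (pt Γ ρ₂)) {k : ℕ} {f : (Fin k → A) → A} (hf : Preserves f ρ₂.2) :
    Preserves f ρ₁.2 := by
  by_cases hu₁ : ρ₁.2 = univ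
  · rw [hu₁]
    exact preserves_univ
  have p₁ := param_mem h₁ (.inl hu₁)
  -- if `univ ∉ Γ`, the full relation has pattern `0`, which bounds no pattern of a proper relation
  have p₂ : ∀ i, param Γ ρ₂ i ∈ Γ := by
    refine param_mem h₂ (or_iff_not_imp_left.2 fun hu₂ => by_contra fun hΓ => ?_)
    have hpos := pt_pos ⟨0, h₁.1⟩ (p₁ ⟨0, h₁.1⟩)
    have hzero := hle.1 (⟨_, p₁ ⟨0, h₁.1⟩⟩ : Γ)
    rw [pt_eq_zero_of_eq_univ (not_not.1 hu₂) hΓ] at hzero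
    exact hpos.ne' (Nat.le_zero.1 hzero)
  rw [pt_eq_natCard_fiber p₁, pt_eq_natCard_fiber p₂] at hle
  obtain ⟨g, hg, hcomp⟩ := exists_surjective_comp_eq_of_sle hle
  have hparam : param Γ ρ₂ = param Γ ρ₁ ∘ g :=
    funext fun i => congrArg Subtype.val (congrFun hcomp i).symm
  rw [cross_param h₁]
  rw [cross_param h₂, hparam] at hf
  exact hf.cross_of_cross_comp hg

theorem pol_subset_pol_of_enc_subset {Q₁ Q₂ : Set (FinRel A)} (hQ₁ : Q₁ ⊆ DD Γ) (hQ₂ : Q₂ ⊆ DD Γ)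
    (h : enc Γ Q₁ ⊆ enc Γ Q₂) : Pol Q₂ ⊆ Pol Q₁ := by
  intro f hf ρ₁ hρ₁
  obtain ⟨ρ₂, hρ₂, hle⟩ := h ⟨ρ₁, hρ₁, fun _ => le_rfl, rfl⟩
  exact Preserves.of_sle_pt (hQ₁ hρ₁) (hQ₂ hρ₂) hle (hf ρ₂ hρ₂)

end Pattern

/-- The kernel of the encoding map `I` is contained in the kernel of `Q ↦ Pol Q`:
if the generated pattern downsets of `Q₁` and `Q₂` coincide, so do their
polymorphism clones. -/
theorem pol_eq_of_enc_eq {A : Type*} (Γ : Set (Set A))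
    (Q₁ Q₂ : Set (FinRel A)) (hQ₁ : Q₁ ⊆ DD Γ) (hQ₂ : Q₂ ⊆ DD Γ)
    (h : enc Γ Q₁ = enc Γ Q₂) :
    Pol Q₁ = Pol Q₂ :=
  (pol_subset_pol_of_enc_subset hQ₂ hQ₁ h.ge).antisymm (pol_subset_pol_of_enc_subset hQ₁ hQ₂ h.le)
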